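/- arXiv:2001.07004 — 6 statements merged into one kernel-verified Lean document; each statement's English description precedes it below -/
import Mathlib

section
/- Let M be a module over 𝔹ℂ with a 𝔹ℂ-valued inner product ⟨·,·⟩ (conjugate-linear via the *-conjugate in the second argument). Then the induced norm ‖φ‖² = |⟨φ,φ⟩| satisfies the generalized Schwarz inequality |⟨φ,ψ⟩| ≤ √2 ‖φ‖ ‖ψ‖ for all φ, ψ ∈ M. -/
noncomputable section

variable {H₁ H₂ : Type*} [NormedAddCommGroup H₁] [InnerProductSpace ℂ H₁]
  [NormedAddCommGroup H₂] [InnerProductSpace ℂ H₂]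

/-- The bicomplex inner product of `f = f⁺e₊ + f⁻e₋` and `g = g⁺e₊ + g⁻e₋` in
`H_bc = H⁺e₊ ⊕ H⁻e₋`, given through its idempotent components
`⟨f,g⟩_bc = ⟨f⁺,g⁺⟩ e₊ + ⟨f⁻,g⁻⟩ e₋` (linear in the first entry; Mathlib's `inner`
is conjugate linear in its first argument, whence the swap). -/
def bcInner (f g : H₁ × H₂) : ℂ × ℂ :=
  ((inner ℂ g.1 f.1 : ℂ), (inner ℂ g.2 f.2 : ℂ))

/-- The squared Euclidean modulus `|λe₊ + μe₋|² = (|λ|² + |μ|²)/2` of a bicomplex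
number given by its idempotent components. -/
def bcAbsSq (c : ℂ × ℂ) : ℝ := (‖c.1‖ ^ 2 + ‖c.2‖ ^ 2) / 2

/-- The squared bicomplex norm `‖f‖²_bc = (‖f⁺‖² + ‖f⁻‖²)/2`. -/
def bcNormSq (f : H₁ × H₂) : ℝ := (‖f.1‖ ^ 2 + ‖f.2‖ ^ 2) / 2

/-- `(fₙ)` is a bc-frame for `H_bc = H⁺e₊ ⊕ H⁻e₋` with bounds `0 < A ≤ B`. -/
def IsBCFrame {ι : Type*} (F : ι → H₁ × H₂) (A B : ℝ) : Prop :=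
  0 < A ∧ A ≤ B ∧ ∀ f : H₁ × H₂,
    A * bcNormSq f ≤ ∑' n, bcAbsSq (bcInner f (F n)) ∧
    ∑' n, bcAbsSq (bcInner f (F n)) ≤ B * bcNormSq f

/-- `(gₙ)` is a frame for the complex Hilbert space `H` with bounds `0 < a ≤ b`. -/
def IsFrame {H : Type*} [NormedAddCommGroup H] [InnerProductSpace ℂ H]
    {ι : Type*} (g : ι → H) (a b : ℝ) : Prop :=
  0 < a ∧ a ≤ b ∧ ∀ x : H,
    a * ‖x‖ ^ 2 ≤ ∑' n, ‖(inner ℂ (g n) x : ℂ)‖ ^ 2 ∧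
    ∑' n, ‖(inner ℂ (g n) x : ℂ)‖ ^ 2 ≤ b * ‖x‖ ^ 2

/-- `(fₙ)` is a bc-frame (for some pair of bounds). -/
def IsBCFrameSeq {ι : Type*} (F : ι → H₁ × H₂) : Prop := ∃ A B, IsBCFrame F A B

/-- `(gₙ)` is a frame (for some pair of bounds). -/
def IsFrameSeq {H : Type*} [NormedAddCommGroup H] [InnerProductSpace ℂ H]
    {ι : Type*} (g : ι → H) : Prop := ∃ a b, IsFrame g a b

end

private lemma norm_inner_self_aux {H : Type*} [NormedAddCommGroup H]
    [InnerProductSpace ℂ H] (x : H) : ‖(inner ℂ x x : ℂ)‖ = ‖x‖ ^ 2 := by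
  rw [inner_self_eq_norm_sq_to_K]
  simp

set_option maxHeartbeats 1000000 in
/-- the generalized Schwarz inequality `|⟨φ,ψ⟩| ≤ √2 ‖φ‖ ‖ψ‖` for the
bicomplex inner product, where the induced norm satisfies `‖φ‖² = |⟨φ,φ⟩|` and `|·|`
is the Euclidean modulus of `𝔹ℂ ≅ ℝ⁴`. -/
theorem bc_generalized_schwarz {H₁ H₂ : Type*}
    [NormedAddCommGroup H₁] [InnerProductSpace ℂ H₁]
    [NormedAddCommGroup H₂] [InnerProductSpace ℂ H₂] (φ ψ : H₁ × H₂) :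
    Real.sqrt (bcAbsSq (bcInner φ ψ)) ≤
      Real.sqrt 2 * Real.sqrt (Real.sqrt (bcAbsSq (bcInner φ φ))) *
        Real.sqrt (Real.sqrt (bcAbsSq (bcInner ψ ψ))) := by
  set a := ‖φ.1‖ with ha
  set c := ‖φ.2‖ with hc
  set b := ‖ψ.1‖ with hb
  set d := ‖ψ.2‖ with hd
  have ha0 : 0 ≤ a := norm_nonneg _
  have hb0 : 0 ≤ b := norm_nonneg _
  have hc0 : 0 ≤ c := norm_nonneg _
  have hd0 : 0 ≤ d := norm_nonneg _
  have hA : bcAbsSq (bcInner φ φ) = (a ^ 4 + c ^ 4) / 2 := by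
    simp only [bcAbsSq, bcInner, norm_inner_self_aux, ← ha, ← hc]
    ring
  have hB : bcAbsSq (bcInner ψ ψ) = (b ^ 4 + d ^ 4) / 2 := by
    simp only [bcAbsSq, bcInner, norm_inner_self_aux, ← hb, ← hd]
    ring
  have h1 : ‖(inner ℂ ψ.1 φ.1 : ℂ)‖ ≤ b * a := norm_inner_le_norm _ _
  have h2 : ‖(inner ℂ ψ.2 φ.2 : ℂ)‖ ≤ d * c := norm_inner_le_norm _ _
  set s := Real.sqrt ((a ^ 4 + c ^ 4) / 2) with hs
  set t := Real.sqrt ((b ^ 4 + d ^ 4) / 2) with ht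
  have hs0 : 0 ≤ s := Real.sqrt_nonneg _
  have ht0 : 0 ≤ t := Real.sqrt_nonneg _
  have hs2 : s ^ 2 = (a ^ 4 + c ^ 4) / 2 := Real.sq_sqrt (by positivity)
  have ht2 : t ^ 2 = (b ^ 4 + d ^ 4) / 2 := Real.sq_sqrt (by positivity)
  -- key inequality
  have key : bcAbsSq (bcInner φ ψ) ≤ 2 * s * t := by
    have hi1 : ‖(inner ℂ ψ.1 φ.1 : ℂ)‖ ^ 2 ≤ (a * b) ^ 2 := by
      have := norm_nonneg (inner ℂ ψ.1 φ.1 : ℂ); nlinarith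
    have hi2 : ‖(inner ℂ ψ.2 φ.2 : ℂ)‖ ^ 2 ≤ (c * d) ^ 2 := by
      have := norm_nonneg (inner ℂ ψ.2 φ.2 : ℂ); nlinarith
    have hcs : (a ^ 2 * b ^ 2 + c ^ 2 * d ^ 2) ≤ 2 * s * t := by
      have hsq : (a ^ 2 * b ^ 2 + c ^ 2 * d ^ 2) ^ 2 ≤ (2 * s * t) ^ 2 := by
        nlinarith [sq_nonneg (a ^ 2 * d ^ 2 - b ^ 2 * c ^ 2)]
      nlinarith [mul_nonneg (mul_nonneg hs0 ht0) (by norm_num : (0:ℝ) ≤ 2),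
        sq_nonneg a, sq_nonneg b, sq_nonneg c, sq_nonneg d]
    have e1 : (a * b) ^ 2 = a ^ 2 * b ^ 2 := by ring
    have e2 : (c * d) ^ 2 = c ^ 2 * d ^ 2 := by ring
    have hst : 0 ≤ s * t := mul_nonneg hs0 ht0
    simp only [bcAbsSq, bcInner]
    linarith
  calc Real.sqrt (bcAbsSq (bcInner φ ψ)) ≤ Real.sqrt (2 * s * t) :=
        Real.sqrt_le_sqrt key
    _ = Real.sqrt 2 * Real.sqrt s * Real.sqrt t := by
        rw [Real.sqrt_mul (by positivity), Real.sqrt_mul (by norm_num)]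
    _ = _ := by rw [hA, hB]
end

section
/- Let (eₙ) be an orthonormal basis of a complex Hilbert space H, and let (aₙ), (bₙ) be complex sequences with Σ|aₙ|² = a and Σ|bₙ|² = b finite and positive. Then the doubly indexed family e_{m,n} = aₙ eₘ e₊ + bₘ eₙ e₋ is a bc-frame for H_bc = H e₊ ⊕ H e₋ with frame bounds min(a,b) and max(a,b); specifically Σ_{m,n} |⟨f, e_{m,n}⟩_bc|² = (a‖f⁺‖² + b‖f⁻‖²)/2 for every f = f⁺e₊ + f⁻e₋. -/
theorem parseval_hasSum {H : Type*} [NormedAddCommGroup H] [InnerProductSpace ℂ H]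
    (e : HilbertBasis ℕ ℂ H) (x : H) :
    HasSum (fun i => ‖(inner ℂ (e i) x : ℂ)‖ ^ 2) (‖x‖ ^ 2) := by
  have h := (e.hasSum_inner_mul_inner x x).mapL Complex.reCLM
  convert h using 1
  · funext i
    rw [Complex.reCLM_apply, ← inner_conj_symm x (e i), mul_comm, Complex.mul_conj]
    simp only [Complex.ofReal_re, Complex.normSq_eq_norm_sq]
  · rw [Complex.reCLM_apply]
    exact (inner_self_eq_norm_sq (𝕜 := ℂ) x).symm

theorem bc_key {H : Type*} [NormedAddCommGroup H] [InnerProductSpace ℂ H]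
    (e : HilbertBasis ℕ ℂ H) (a b : ℕ → ℂ) (sa sb : ℝ)
    (ha : HasSum (fun n => ‖a n‖ ^ 2) sa) (hb : HasSum (fun n => ‖b n‖ ^ 2) sb)
    (f : H × H) :
    HasSum (fun p : ℕ × ℕ =>
        bcAbsSq (bcInner f (a p.2 • (e p.1 : H), b p.1 • (e p.2 : H))))
      ((sa * ‖f.1‖ ^ 2 + sb * ‖f.2‖ ^ 2) / 2) := by
  have h1 := parseval_hasSum e f.1
  have h2 := parseval_hasSum e f.2
  have hn1 : (0 : ℕ → ℝ) ≤ fun i => ‖(inner ℂ (e i) f.1 : ℂ)‖ ^ 2 := fun _ => sq_nonneg _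
  have hn2 : (0 : ℕ → ℝ) ≤ fun n => ‖a n‖ ^ 2 := fun _ => sq_nonneg _
  have hn3 : (0 : ℕ → ℝ) ≤ fun n => ‖b n‖ ^ 2 := fun _ => sq_nonneg _
  have hn4 : (0 : ℕ → ℝ) ≤ fun i => ‖(inner ℂ (e i) f.2 : ℂ)‖ ^ 2 := fun _ => sq_nonneg _
  have s1 := Summable.mul_of_nonneg h1.summable ha.summable hn1 hn2
  have s2 := Summable.mul_of_nonneg hb.summable h2.summable hn3 hn4
  have H1 := h1.mul ha s1
  have H2 := hb.mul h2 s2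
  have H3 := (H1.add H2).div_const 2
  have efun : (fun p : ℕ × ℕ =>
        bcAbsSq (bcInner f (a p.2 • (e p.1 : H), b p.1 • (e p.2 : H)))) =
      fun p : ℕ × ℕ => (‖(inner ℂ (e p.1) f.1 : ℂ)‖ ^ 2 * ‖a p.2‖ ^ 2 +
        ‖b p.1‖ ^ 2 * ‖(inner ℂ (e p.2) f.2 : ℂ)‖ ^ 2) / 2 := by
    funext p
    simp only [bcAbsSq, bcInner, inner_smul_left, norm_mul, RCLike.norm_conj, mul_pow]
    ring
  rw [efun, show (sa * ‖f.1‖ ^ 2 + sb * ‖f.2‖ ^ 2) / 2 =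
    (‖f.1‖ ^ 2 * sa + sb * ‖f.2‖ ^ 2) / 2 from by ring]
  exact H3

/-- given an orthonormal (Hilbert) basis `(eₙ)` of `H` and complex
sequences with `Σ|aₙ|² = a`, `Σ|bₙ|² = b` finite and positive, the family
`e_{m,n} = aₙ eₘ e₊ + bₘ eₙ e₋` is a bc-frame for `H_bc = H e₊ ⊕ H e₋` with bounds
`min(a,b)`, `max(a,b)`, and `Σ_{m,n} |⟨f,e_{m,n}⟩_bc|² = (a‖f⁺‖² + b‖f⁻‖²)/2`. -/
theorem bc_frame_from_onb {H : Type*} [NormedAddCommGroup H] [InnerProductSpace ℂ H]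
    (e : HilbertBasis ℕ ℂ H) (a b : ℕ → ℂ) (sa sb : ℝ)
    (ha : HasSum (fun n => ‖a n‖ ^ 2) sa) (hb : HasSum (fun n => ‖b n‖ ^ 2) sb)
    (hsa : 0 < sa) (hsb : 0 < sb) :
    (∀ f : H × H,
      ∑' p : ℕ × ℕ,
          bcAbsSq (bcInner f (a p.2 • (e p.1 : H), b p.1 • (e p.2 : H))) =
        (sa * ‖f.1‖ ^ 2 + sb * ‖f.2‖ ^ 2) / 2) ∧
    IsBCFrame (fun p : ℕ × ℕ => (a p.2 • (e p.1 : H), b p.1 • (e p.2 : H)))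
      (min sa sb) (max sa sb) := by
  have key := fun f : H × H => (bc_key e a b sa sb ha hb f).tsum_eq
  refine ⟨key, lt_min hsa hsb, (min_le_left sa sb).trans (le_max_left sa sb), fun f => ?_⟩
  rw [show (∑' p : ℕ × ℕ, bcAbsSq (bcInner f
      ((fun p : ℕ × ℕ => (a p.2 • (e p.1 : H), b p.1 • (e p.2 : H))) p))) =
      (sa * ‖f.1‖ ^ 2 + sb * ‖f.2‖ ^ 2) / 2 from key f]
  unfold bcNormSq
  constructor
  · nlinarith [mul_le_mul_of_nonneg_right (min_le_left sa sb) (sq_nonneg ‖f.1‖),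
      mul_le_mul_of_nonneg_right (min_le_right sa sb) (sq_nonneg ‖f.2‖)]
  · nlinarith [mul_le_mul_of_nonneg_right (le_max_left sa sb) (sq_nonneg ‖f.1‖),
      mul_le_mul_of_nonneg_right (le_max_right sa sb) (sq_nonneg ‖f.2‖)]
end

section
/- If (fₙ⁺) is a bounded unconditional basis for a complex Hilbert space H, (fₙ⁻) is an unconditional basis for H, and both sequences (‖fₙ⁺‖) and (‖fₙ⁻‖) are bounded above, with inf ‖fₙ⁺‖ > 0, then (fₙ) = (fₙ⁺e₊ + fₙ⁻e₋) is a bicomplex bounded unconditional basis for H_bc = He₊ ⊕ He₋. -/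
/-- `(gₙ)` is an unconditional basis for the complex Hilbert space `H`: every vector
has a unique expansion `x = Σ cₙ gₙ` converging unconditionally (`HasSum`). -/
def IsUnconditionalBasis {H : Type*} [NormedAddCommGroup H] [InnerProductSpace ℂ H]
    (g : ℕ → H) : Prop :=
  ∀ x : H, ∃! c : ℕ → ℂ, HasSum (fun n => c n • g n) x

/-- `(gₙ)` is a bounded unconditional basis: additionally `0 < inf ‖gₙ‖ ≤ sup ‖gₙ‖ < ∞`. -/
def IsBoundedUnconditionalBasis {H : Type*} [NormedAddCommGroup H] [InnerProductSpace ℂ H]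
    (g : ℕ → H) : Prop :=
  IsUnconditionalBasis g ∧ ∃ m M : ℝ, 0 < m ∧ ∀ n, m ≤ ‖g n‖ ∧ ‖g n‖ ≤ M

/-- `(fₙ)` is a bicomplex unconditional basis for `H_bc = H⁺e₊ ⊕ H⁻e₋`: every `f` has a
unique unconditionally convergent expansion `f = Σ cₙ fₙ` with bicomplex coefficients
`cₙ = αₙe₊ + βₙe₋` acting componentwise. -/
def IsBCUnconditionalBasis {H₁ H₂ : Type*}
    [NormedAddCommGroup H₁] [InnerProductSpace ℂ H₁]
    [NormedAddCommGroup H₂] [InnerProductSpace ℂ H₂] (F : ℕ → H₁ × H₂) : Prop :=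
  ∀ f : H₁ × H₂, ∃! c : ℕ → ℂ × ℂ,
    HasSum (fun n => (((c n).1 • (F n).1, (c n).2 • (F n).2) : H₁ × H₂)) f

/-- `(fₙ)` is a bicomplex bounded unconditional basis:
`0 < inf |⟨fₙ,fₙ⟩_bc| ≤ sup |⟨fₙ,fₙ⟩_bc| < ∞` in addition. -/
def IsBCBoundedUnconditionalBasis {H₁ H₂ : Type*}
    [NormedAddCommGroup H₁] [InnerProductSpace ℂ H₁]
    [NormedAddCommGroup H₂] [InnerProductSpace ℂ H₂] (F : ℕ → H₁ × H₂) : Prop :=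
  IsBCUnconditionalBasis F ∧ ∃ m M : ℝ, 0 < m ∧ ∀ n,
    m ≤ Real.sqrt (bcAbsSq (bcInner (F n) (F n))) ∧
    Real.sqrt (bcAbsSq (bcInner (F n) (F n))) ≤ M

/-- if `(fₙ⁺)` is a bounded unconditional basis for `H`, `(fₙ⁻)` is an
unconditional basis for `H`, both `(‖fₙ⁺‖)` and `(‖fₙ⁻‖)` are bounded above, and
`inf ‖fₙ⁺‖ > 0`, then `(fₙ) = (fₙ⁺e₊ + fₙ⁻e₋)` is a bicomplex bounded unconditional
basis for `H_bc = He₊ ⊕ He₋`. -/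
theorem bc_bounded_unconditional_basis_of_components {H : Type*}
    [NormedAddCommGroup H] [InnerProductSpace ℂ H] (F : ℕ → H × H)
    (h₁ : IsBoundedUnconditionalBasis (fun n => (F n).1))
    (h₂ : IsUnconditionalBasis (fun n => (F n).2))
    (hM : ∃ M : ℝ, ∀ n, ‖(F n).1‖ ≤ M ∧ ‖(F n).2‖ ≤ M)
    (hm : ∃ m : ℝ, 0 < m ∧ ∀ n, m ≤ ‖(F n).1‖) :
    IsBCBoundedUnconditionalBasis F := by
  obtain ⟨hub₁, _⟩ := h₁
  obtain ⟨M, hMle⟩ := hM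
  obtain ⟨m, hm0, hmle⟩ := hm
  constructor
  · intro f
    obtain ⟨c₁, hc₁, hu₁⟩ := hub₁ f.1
    obtain ⟨c₂, hc₂, hu₂⟩ := h₂ f.2
    refine ⟨fun n => (c₁ n, c₂ n), ?_, ?_⟩
    · exact (hc₁.prodMk hc₂)
    · intro c hc
      have hfst : HasSum (fun n => (c n).1 • (F n).1) f.1 := by
        have := hc.map (ContinuousLinearMap.fst ℂ H H) (ContinuousLinearMap.fst ℂ H H).continuous
        simpa [Function.comp_def] using this
      have hsnd : HasSum (fun n => (c n).2 • (F n).2) f.2 := by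
        have := hc.map (ContinuousLinearMap.snd ℂ H H) (ContinuousLinearMap.snd ℂ H H).continuous
        simpa [Function.comp_def] using this
      have e1 : (fun n => (c n).1) = c₁ := hu₁ _ hfst
      have e2 : (fun n => (c n).2) = c₂ := hu₂ _ hsnd
      funext n
      exact Prod.ext (congrFun e1 n) (congrFun e2 n)
  · have hM0 : 0 ≤ M := le_trans (norm_nonneg _) (hMle 0).1
    refine ⟨m ^ 2 / Real.sqrt 2, M ^ 2, by positivity, fun n => ?_⟩
    have key : bcAbsSq (bcInner (F n) (F n))
        = (‖(F n).1‖ ^ 4 + ‖(F n).2‖ ^ 4) / 2 := by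
      simp only [bcAbsSq, bcInner]
      rw [@inner_self_eq_norm_sq_to_K ℂ, @inner_self_eq_norm_sq_to_K ℂ]
      push_cast
      rw [norm_pow, norm_pow]
      simp [Complex.norm_real, abs_of_nonneg (norm_nonneg _)]
      ring
    have h1 := hmle n
    have h2 := (hMle n).1
    have h3 := (hMle n).2
    have hn1 : (0:ℝ) ≤ ‖(F n).1‖ := norm_nonneg _
    have hn2 : (0:ℝ) ≤ ‖(F n).2‖ := norm_nonneg _
    rw [key]
    constructor
    · rw [Real.le_sqrt (by positivity)]
      have : (m ^ 2 / Real.sqrt 2) ^ 2 = m ^ 4 / 2 := by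
        rw [div_pow, Real.sq_sqrt (by norm_num)]; ring
      rw [this]
      have h4 : m ^ 4 ≤ ‖(F n).1‖ ^ 4 := pow_le_pow_left₀ hm0.le h1 4
      have h5 : (0:ℝ) ≤ ‖(F n).2‖ ^ 4 := by positivity
      · linarith
      · positivity
    · have hup : (‖(F n).1‖ ^ 4 + ‖(F n).2‖ ^ 4) / 2 ≤ (M ^ 2) ^ 2 := by
        have h4 : ‖(F n).1‖ ^ 4 ≤ M ^ 4 := pow_le_pow_left₀ hn1 h2 4
        have h5 : ‖(F n).2‖ ^ 4 ≤ M ^ 4 := pow_le_pow_left₀ hn2 h3 4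
        have : (M ^ 2) ^ 2 = M ^ 4 := by ring
        linarith
      calc Real.sqrt ((‖(F n).1‖ ^ 4 + ‖(F n).2‖ ^ 4) / 2)
          ≤ Real.sqrt ((M ^ 2) ^ 2) := Real.sqrt_le_sqrt hup
        _ = M ^ 2 := Real.sqrt_sq (by positivity)
end

section
/- A sequence (fₙ) in H_bc = H⁺e₊ ⊕ H⁻e₋ is a bicomplex Riesz basis if and only if both idempotent component sequences (fₙ⁺) and (fₙ⁻) are Riesz bases for H⁺ and H⁻ respectively. -/
/-- `(gₙ)` is a Riesz basis for the complex Hilbert space `H`: it is complete and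
`a Σ|cₙ|² ≤ ‖Σ cₙ gₙ‖² ≤ b Σ|cₙ|²` for some `a, b > 0` and all `ℓ²` coefficients. -/
def IsRieszBasis {H : Type*} [NormedAddCommGroup H] [InnerProductSpace ℂ H]
    (g : ℕ → H) : Prop :=
  closure (Submodule.span ℂ (Set.range g) : Set H) = Set.univ ∧
  ∃ a b : ℝ, 0 < a ∧ 0 < b ∧ ∀ (c : ℕ → ℂ) (s : ℝ),
    HasSum (fun n => ‖c n‖ ^ 2) s → ∀ x : H, HasSum (fun n => c n • g n) x →
      a * s ≤ ‖x‖ ^ 2 ∧ ‖x‖ ^ 2 ≤ b * s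

/-- `(fₙ)` is a bicomplex Riesz basis for `H_bc = H⁺e₊ ⊕ H⁻e₋`: its bicomplex span is
dense and `A Σ|cₙ|²_bc ≤ ‖Σ cₙ fₙ‖²_bc ≤ B Σ|cₙ|²_bc` for some `A, B > 0`, the
bicomplex scalars `cₙ = αₙe₊ + βₙe₋` acting componentwise. -/
def IsBCRieszBasis {H₁ H₂ : Type*}
    [NormedAddCommGroup H₁] [InnerProductSpace ℂ H₁]
    [NormedAddCommGroup H₂] [InnerProductSpace ℂ H₂] (F : ℕ → H₁ × H₂) : Prop :=
  closure (Submodule.span ℂ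
      (Set.range (fun n => (((F n).1, 0) : H₁ × H₂)) ∪
       Set.range (fun n => (((0 : H₁), (F n).2) : H₁ × H₂))) : Set (H₁ × H₂)) =
    Set.univ ∧
  ∃ A B : ℝ, 0 < A ∧ 0 < B ∧ ∀ (c : ℕ → ℂ × ℂ) (s : ℝ),
    HasSum (fun n => bcAbsSq (c n)) s →
    ∀ x : H₁ × H₂,
      HasSum (fun n => (((c n).1 • (F n).1, (c n).2 • (F n).2) : H₁ × H₂)) x →
      A * s ≤ bcNormSq x ∧ bcNormSq x ≤ B * s

section Aux

variable {H₁ H₂ : Type*} [NormedAddCommGroup H₁] [InnerProductSpace ℂ H₁]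
  [NormedAddCommGroup H₂] [InnerProductSpace ℂ H₂]

lemma aux_closure_fst (F : ℕ → H₁ × H₂)
    (h : closure (Submodule.span ℂ
      (Set.range (fun n => (((F n).1, 0) : H₁ × H₂)) ∪
       Set.range (fun n => (((0 : H₁), (F n).2) : H₁ × H₂))) : Set (H₁ × H₂)) =
      Set.univ) :
    closure (Submodule.span ℂ (Set.range fun n => (F n).1) : Set H₁) = Set.univ := by
  rw [Set.eq_univ_iff_forall]
  intro x
  have hxy : ((x, 0) : H₁ × H₂) ∈ closure (Submodule.span ℂ
      (Set.range (fun n => (((F n).1, 0) : H₁ × H₂)) ∪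
       Set.range (fun n => (((0 : H₁), (F n).2) : H₁ × H₂))) : Set (H₁ × H₂)) := by
    rw [h]; trivial
  have hle : (Submodule.span ℂ
      (Set.range (fun n => (((F n).1, 0) : H₁ × H₂)) ∪
       Set.range (fun n => (((0 : H₁), (F n).2) : H₁ × H₂))) : Set (H₁ × H₂)) ⊆
      ((Submodule.span ℂ (Set.range fun n => (F n).1)).prod (⊤ : Submodule ℂ H₂) : Set (H₁ × H₂)) := by
    apply Submodule.span_le.mpr
    rintro z (⟨n, rfl⟩ | ⟨n, rfl⟩)
    · exact ⟨Submodule.subset_span ⟨n, rfl⟩, trivial⟩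
    · exact ⟨(Submodule.span ℂ _).zero_mem, trivial⟩
  have := closure_mono hle hxy
  rw [Submodule.prod_coe, closure_prod_eq] at this
  exact this.1

lemma aux_closure_snd (F : ℕ → H₁ × H₂)
    (h : closure (Submodule.span ℂ
      (Set.range (fun n => (((F n).1, 0) : H₁ × H₂)) ∪
       Set.range (fun n => (((0 : H₁), (F n).2) : H₁ × H₂))) : Set (H₁ × H₂)) =
      Set.univ) :
    closure (Submodule.span ℂ (Set.range fun n => (F n).2) : Set H₂) = Set.univ := by
  rw [Set.eq_univ_iff_forall]
  intro y
  have hxy : ((0, y) : H₁ × H₂) ∈ closure (Submodule.span ℂ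
      (Set.range (fun n => (((F n).1, 0) : H₁ × H₂)) ∪
       Set.range (fun n => (((0 : H₁), (F n).2) : H₁ × H₂))) : Set (H₁ × H₂)) := by
    rw [h]; trivial
  have hle : (Submodule.span ℂ
      (Set.range (fun n => (((F n).1, 0) : H₁ × H₂)) ∪
       Set.range (fun n => (((0 : H₁), (F n).2) : H₁ × H₂))) : Set (H₁ × H₂)) ⊆
      ((⊤ : Submodule ℂ H₁).prod (Submodule.span ℂ (Set.range fun n => (F n).2))
        : Set (H₁ × H₂)) := by
    apply Submodule.span_le.mpr
    rintro z (⟨n, rfl⟩ | ⟨n, rfl⟩)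
    · exact ⟨trivial, (Submodule.span ℂ _).zero_mem⟩
    · exact ⟨trivial, Submodule.subset_span ⟨n, rfl⟩⟩
  have := closure_mono hle hxy
  rw [Submodule.prod_coe, closure_prod_eq] at this
  exact this.2

lemma aux_closure_prod (F : ℕ → H₁ × H₂)
    (h1 : closure (Submodule.span ℂ (Set.range fun n => (F n).1) : Set H₁) = Set.univ)
    (h2 : closure (Submodule.span ℂ (Set.range fun n => (F n).2) : Set H₂) = Set.univ) :
    closure (Submodule.span ℂ
      (Set.range (fun n => (((F n).1, 0) : H₁ × H₂)) ∪
       Set.range (fun n => (((0 : H₁), (F n).2) : H₁ × H₂))) : Set (H₁ × H₂)) =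
      Set.univ := by
  set U := Set.range (fun n => (((F n).1, 0) : H₁ × H₂)) ∪
       Set.range (fun n => (((0 : H₁), (F n).2) : H₁ × H₂))
  set M := (Submodule.span ℂ U).topologicalClosure with hM
  have hMcoe : (M : Set (H₁ × H₂)) = closure (Submodule.span ℂ U : Set (H₁ × H₂)) := rfl
  rw [Set.eq_univ_iff_forall]
  intro z
  have hfst : ∀ x : H₁, ((x, 0) : H₁ × H₂) ∈ M := by
    intro x
    set N := M.comap (LinearMap.inl ℂ H₁ H₂) with hN
    have hNclosed : IsClosed (N : Set H₁) := by
      have : (N : Set H₁) = (fun x : H₁ => ((x, 0) : H₁ × H₂)) ⁻¹' (M : Set (H₁ × H₂)) := rfl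
      rw [this]
      exact (Submodule.isClosed_topologicalClosure (Submodule.span ℂ U)).preimage (continuous_id.prodMk continuous_const)
    have hsub : (Submodule.span ℂ (Set.range fun n => (F n).1)) ≤ N := by
      apply Submodule.span_le.mpr
      rintro w ⟨n, rfl⟩
      show ((F n).1, (0 : H₂)) ∈ M
      exact Submodule.le_topologicalClosure _ (Submodule.subset_span (Or.inl ⟨n, rfl⟩))
    have : closure (Submodule.span ℂ (Set.range fun n => (F n).1) : Set H₁) ⊆ (N : Set H₁) :=
      closure_minimal hsub hNclosed
    rw [h1] at this
    exact this trivial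
  have hsnd : ∀ y : H₂, ((0, y) : H₁ × H₂) ∈ M := by
    intro y
    set N := M.comap (LinearMap.inr ℂ H₁ H₂) with hN
    have hNclosed : IsClosed (N : Set H₂) := by
      have : (N : Set H₂) = (fun y : H₂ => ((0, y) : H₁ × H₂)) ⁻¹' (M : Set (H₁ × H₂)) := rfl
      rw [this]
      exact (Submodule.isClosed_topologicalClosure (Submodule.span ℂ U)).preimage (continuous_const.prodMk continuous_id)
    have hsub : (Submodule.span ℂ (Set.range fun n => (F n).2)) ≤ N := by
      apply Submodule.span_le.mpr
      rintro w ⟨n, rfl⟩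
      show ((0 : H₁), (F n).2) ∈ M
      exact Submodule.le_topologicalClosure _ (Submodule.subset_span (Or.inr ⟨n, rfl⟩))
    have : closure (Submodule.span ℂ (Set.range fun n => (F n).2) : Set H₂) ⊆ (N : Set H₂) :=
      closure_minimal hsub hNclosed
    rw [h2] at this
    exact this trivial
  have : z ∈ M := by
    have : z = ((z.1, 0) : H₁ × H₂) + ((0, z.2) : H₁ × H₂) := by simp
    rw [this]
    exact M.add_mem (hfst z.1) (hsnd z.2)
  exact this

end Aux

/-- `(fₙ)` is a bicomplex Riesz basis iff both idempotent component
sequences are Riesz bases. -/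
theorem bc_riesz_basis_iff {H₁ H₂ : Type*}
    [NormedAddCommGroup H₁] [InnerProductSpace ℂ H₁]
    [NormedAddCommGroup H₂] [InnerProductSpace ℂ H₂] (F : ℕ → H₁ × H₂) :
    IsBCRieszBasis F ↔
      IsRieszBasis (fun n => (F n).1) ∧ IsRieszBasis (fun n => (F n).2) := by
  constructor
  · rintro ⟨hcl, A, B, hA, hB, hbound⟩
    constructor
    · refine ⟨aux_closure_fst F hcl, A, B, hA, hB, ?_⟩
      intro c s hs x hx
      have hs' : HasSum (fun n => bcAbsSq ((c n, 0) : ℂ × ℂ)) (s / 2) := by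
        simpa [bcAbsSq] using hs.div_const 2
      have hx' : HasSum (fun n => ((c n • (F n).1, (0 : ℂ) • (F n).2) : H₁ × H₂))
          ((x, 0) : H₁ × H₂) := by
        simpa [zero_smul] using hx.prodMk (hasSum_zero : HasSum (fun _ : ℕ => (0 : H₂)) 0)
      have := hbound (fun n => (c n, 0)) (s / 2) hs' (x, 0) hx'
      simp only [bcNormSq, norm_zero] at this
      constructor <;> nlinarith [this.1, this.2]
    · refine ⟨aux_closure_snd F hcl, A, B, hA, hB, ?_⟩
      intro c s hs x hx
      have hs' : HasSum (fun n => bcAbsSq ((0, c n) : ℂ × ℂ)) (s / 2) := by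
        simpa [bcAbsSq] using hs.div_const 2
      have hx' : HasSum (fun n => (((0 : ℂ) • (F n).1, c n • (F n).2) : H₁ × H₂))
          ((0, x) : H₁ × H₂) := by
        simpa [zero_smul] using
          (hasSum_zero : HasSum (fun _ : ℕ => (0 : H₁)) 0).prodMk hx
      have := hbound (fun n => (0, c n)) (s / 2) hs' (0, x) hx'
      simp only [bcNormSq, norm_zero] at this
      constructor <;> nlinarith [this.1, this.2]
  · rintro ⟨⟨hcl1, a1, b1, ha1, hb1, hbd1⟩, ⟨hcl2, a2, b2, ha2, hb2, hbd2⟩⟩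
    refine ⟨aux_closure_prod F hcl1 hcl2, min a1 a2, max b1 b2,
      lt_min ha1 ha2, lt_max_of_lt_left hb1, ?_⟩
    intro c s hs x hx
    have hsum : Summable (fun n => bcAbsSq (c n)) := hs.summable
    have hnn1 : ∀ n, (0 : ℝ) ≤ ‖(c n).1‖ ^ 2 := fun n => sq_nonneg _
    have hnn2 : ∀ n, (0 : ℝ) ≤ ‖(c n).2‖ ^ 2 := fun n => sq_nonneg _
    have hsum1 : Summable (fun n => ‖(c n).1‖ ^ 2) := by
      apply Summable.of_nonneg_of_le hnn1 (fun n => ?_) (hsum.mul_left 2)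
      simp only [bcAbsSq]
      nlinarith [sq_nonneg ‖(c n).2‖]
    have hsum2 : Summable (fun n => ‖(c n).2‖ ^ 2) := by
      apply Summable.of_nonneg_of_le hnn2 (fun n => ?_) (hsum.mul_left 2)
      simp only [bcAbsSq]
      nlinarith [sq_nonneg ‖(c n).1‖]
    set s1 := ∑' n, ‖(c n).1‖ ^ 2 with hs1def
    set s2 := ∑' n, ‖(c n).2‖ ^ 2 with hs2def
    have hS1 : HasSum (fun n => ‖(c n).1‖ ^ 2) s1 := hsum1.hasSum
    have hS2 : HasSum (fun n => ‖(c n).2‖ ^ 2) s2 := hsum2.hasSum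
    have hs12 : s1 + s2 = 2 * s := by
      have h2s : HasSum (fun n => ‖(c n).1‖ ^ 2 + ‖(c n).2‖ ^ 2) (2 * s) := by
        have := hs.mul_left 2
        convert this using 2 with n
        · rfl
        simp only [bcAbsSq]; ring
      exact (hS1.add hS2).unique h2s
    have hs1nn : 0 ≤ s1 := tsum_nonneg hnn1
    have hs2nn : 0 ≤ s2 := tsum_nonneg hnn2
    have hx1 : HasSum (fun n => (c n).1 • (F n).1) x.1 := by
      have := (ContinuousLinearMap.fst ℂ H₁ H₂).hasSum hx
      simpa using this
    have hx2 : HasSum (fun n => (c n).2 • (F n).2) x.2 := by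
      have := (ContinuousLinearMap.snd ℂ H₁ H₂).hasSum hx
      simpa using this
    have h1 := hbd1 (fun n => (c n).1) s1 hS1 x.1 hx1
    have h2 := hbd2 (fun n => (c n).2) s2 hS2 x.2 hx2
    have hmin1 : min a1 a2 ≤ a1 := min_le_left _ _
    have hmin2 : min a1 a2 ≤ a2 := min_le_right _ _
    have hmax1 : b1 ≤ max b1 b2 := le_max_left _ _
    have hmax2 : b2 ≤ max b1 b2 := le_max_right _ _
    simp only [bcNormSq]
    constructor
    · nlinarith [h1.1, h2.1, mul_le_mul_of_nonneg_right hmin1 hs1nn,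
        mul_le_mul_of_nonneg_right hmin2 hs2nn]
    · nlinarith [h1.2, h2.2, mul_le_mul_of_nonneg_right hmax1 hs1nn,
        mul_le_mul_of_nonneg_right hmax2 hs2nn]
end

section
/- If (fₙ) is a tight bc-frame for H_bc = H⁺e₊ ⊕ H⁻e₋, then the component sequences (fₙ⁺) and (fₙ⁻) are tight frames for H⁺ and H⁻ respectively. -/
/-- if `(fₙ)` is a tight bc-frame for `H_bc = H⁺e₊ ⊕ H⁻e₋` (frame with
equal bounds `A = B`), then the component sequences `(fₙ⁺)` and `(fₙ⁻)` are tight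
frames for `H⁺` and `H⁻`. -/
theorem bc_tight_frame_components {H₁ H₂ : Type*}
    [NormedAddCommGroup H₁] [InnerProductSpace ℂ H₁]
    [NormedAddCommGroup H₂] [InnerProductSpace ℂ H₂] (F : ℕ → H₁ × H₂)
    (hF : ∃ A : ℝ, IsBCFrame F A A) :
    (∃ a : ℝ, IsFrame (fun n => (F n).1) a a) ∧
    (∃ a : ℝ, IsFrame (fun n => (F n).2) a a) := by
  obtain ⟨A, hA, -, h⟩ := hF
  constructor
  · refine ⟨A, hA, le_refl _, fun x => ?_⟩
    obtain ⟨h1, h2⟩ := h (x, (0 : H₂))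
    have hsum : ∀ n, bcAbsSq (bcInner ((x, (0:H₂))) (F n))
        = ‖(inner ℂ ((F n).1) x : ℂ)‖ ^ 2 / 2 := by
      intro n
      simp [bcAbsSq, bcInner, inner_zero_right]
    simp only [hsum] at h1 h2
    rw [tsum_div_const] at h1 h2
    simp only [bcNormSq, norm_zero] at h1 h2
    constructor <;> nlinarith [h1, h2]
  · refine ⟨A, hA, le_refl _, fun x => ?_⟩
    obtain ⟨h1, h2⟩ := h ((0 : H₁), x)
    have hsum : ∀ n, bcAbsSq (bcInner (((0:H₁), x)) (F n))
        = ‖(inner ℂ ((F n).2) x : ℂ)‖ ^ 2 / 2 := by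
      intro n
      simp [bcAbsSq, bcInner, inner_zero_right]
    simp only [hsum] at h1 h2
    rw [tsum_div_const] at h1 h2
    simp only [bcNormSq, norm_zero] at h1 h2
    constructor <;> nlinarith [h1, h2]
end

section
/- If (fₙ) is a bicomplex Riesz basis for H_bc, then (fₙ) is an exact bc-frame for H_bc. -/
/-- `(gₙ)` is an exact frame: a frame which ceases to be a frame whenever any single
element is deleted from it. -/
def IsExactFrame {H : Type*} [NormedAddCommGroup H] [InnerProductSpace ℂ H]
    (g : ℕ → H) : Prop :=
  IsFrameSeq g ∧ ∀ k : ℕ, ¬ IsFrameSeq (fun n : {n : ℕ // n ≠ k} => g n)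

/-- `(fₙ)` is an exact bc-frame: a bc-frame which ceases to be a bc-frame whenever any
single element is deleted from it. -/
def IsExactBCFrame {H₁ H₂ : Type*}
    [NormedAddCommGroup H₁] [InnerProductSpace ℂ H₁]
    [NormedAddCommGroup H₂] [InnerProductSpace ℂ H₂] (F : ℕ → H₁ × H₂) : Prop :=
  IsBCFrameSeq F ∧ ∀ k : ℕ, ¬ IsBCFrameSeq (fun n : {n : ℕ // n ≠ k} => F n)


/-! ### Auxiliary lemmas -/

section ClassicalAux
variable {H : Type*} [NormedAddCommGroup H] [InnerProductSpace ℂ H]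

lemma riesz_finset' {g : ℕ → H} {a b : ℝ}
    (hR : ∀ (c : ℕ → ℂ) (s : ℝ), HasSum (fun n => ‖c n‖ ^ 2) s →
      ∀ x : H, HasSum (fun n => c n • g n) x → a * s ≤ ‖x‖ ^ 2 ∧ ‖x‖ ^ 2 ≤ b * s)
    (c : ℕ → ℂ) (S : Finset ℕ) (hc : ∀ n ∉ S, c n = 0) :
    a * ∑ n ∈ S, ‖c n‖ ^ 2 ≤ ‖∑ n ∈ S, c n • g n‖ ^ 2 ∧
      ‖∑ n ∈ S, c n • g n‖ ^ 2 ≤ b * ∑ n ∈ S, ‖c n‖ ^ 2 :=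
  hR c _ (hasSum_sum_of_ne_finset_zero (s := S) (fun n hn => by simp [hc n hn]))
    _ (hasSum_sum_of_ne_finset_zero (s := S) (fun n hn => by simp [hc n hn]))

lemma bessel_finset' {g : ℕ → H} {b : ℝ}
    (hup : ∀ (c : ℕ → ℂ) (S : Finset ℕ), (∀ n ∉ S, c n = 0) →
      ‖∑ n ∈ S, c n • g n‖ ^ 2 ≤ b * ∑ n ∈ S, ‖c n‖ ^ 2)
    (x : H) (S : Finset ℕ) (hbx : 0 ≤ b * ‖x‖ ^ 2) :
    ∑ n ∈ S, ‖(inner ℂ (g n) x : ℂ)‖ ^ 2 ≤ b * ‖x‖ ^ 2 := by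
  classical
  set c : ℕ → ℂ := fun n => if n ∈ S then (inner ℂ (g n) x : ℂ) else 0 with hcdef
  have hc0 : ∀ n ∉ S, c n = 0 := fun n hn => by simp [hcdef, hn]
  set t : ℝ := ∑ n ∈ S, ‖c n‖ ^ 2 with htdef
  have hteq : t = ∑ n ∈ S, ‖(inner ℂ (g n) x : ℂ)‖ ^ 2 :=
    Finset.sum_congr rfl (fun n hn => by simp [hcdef, hn])
  have ht0 : (0:ℝ) ≤ t := Finset.sum_nonneg fun n _ => sq_nonneg _
  set y : H := ∑ n ∈ S, c n • g n with hydef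
  have hy : ‖y‖ ^ 2 ≤ b * t := hup c S hc0
  have hyx : (inner ℂ y x : ℂ) = (t : ℂ) := by
    rw [hydef, sum_inner, htdef]
    push_cast
    refine Finset.sum_congr rfl fun n hn => ?_
    rw [inner_smul_left]
    simp only [hcdef, if_pos hn]
    rw [RCLike.conj_mul]
    norm_cast
  have h1 : t ≤ ‖y‖ * ‖x‖ := by
    have h := norm_inner_le_norm (𝕜 := ℂ) y x
    rw [hyx] at h
    simpa [abs_of_nonneg ht0] using h
  rw [← hteq]
  rcases eq_or_lt_of_le ht0 with h | h
  · rw [← h]; exact hbx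
  · have h2 : t * t ≤ (b * ‖x‖ ^ 2) * t := by
      calc t * t ≤ (‖y‖ * ‖x‖) * (‖y‖ * ‖x‖) := mul_le_mul h1 h1 ht0 (by positivity)
        _ = ‖y‖ ^ 2 * ‖x‖ ^ 2 := by ring
        _ ≤ (b * t) * ‖x‖ ^ 2 := mul_le_mul_of_nonneg_right hy (sq_nonneg _)
        _ = (b * ‖x‖ ^ 2) * t := by ring
    exact le_of_mul_le_mul_right h2 h

lemma frame_lower' {g : ℕ → H} {a : ℝ} (ha : 0 < a)
    (hdense : closure (Submodule.span ℂ (Set.range g) : Set H) = Set.univ)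
    (hlow : ∀ (c : ℕ → ℂ) (S : Finset ℕ), (∀ n ∉ S, c n = 0) →
      a * ∑ n ∈ S, ‖c n‖ ^ 2 ≤ ‖∑ n ∈ S, c n • g n‖ ^ 2)
    (x₀ : H)
    (hsumm : Summable (fun n => ‖(inner ℂ (g n) x₀ : ℂ)‖ ^ 2)) :
    a * ‖x₀‖ ^ 2 ≤ ∑' n, ‖(inner ℂ (g n) x₀ : ℂ)‖ ^ 2 := by
  classical
  set T : ℝ := ∑' n, ‖(inner ℂ (g n) x₀ : ℂ)‖ ^ 2 with hT
  have hT0 : 0 ≤ T := tsum_nonneg fun n => sq_nonneg _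
  set C : ℝ := Real.sqrt (T / a) with hC
  have hC0 : 0 ≤ C := Real.sqrt_nonneg _
  have hCeq : C = Real.sqrt T / Real.sqrt a := by rw [hC, Real.sqrt_div hT0]
  have key : ∀ ε : ℝ, 0 < ε → ‖x₀‖ ^ 2 ≤ ‖x₀‖ * C + ε * (C + ‖x₀‖) := by
    intro ε hε
    have hx₀cl : x₀ ∈ closure (Submodule.span ℂ (Set.range g) : Set H) := by
      rw [hdense]; trivial
    obtain ⟨y, hy_mem, hy_close⟩ := Metric.mem_closure_iff.1 hx₀cl ε hε
    rw [dist_eq_norm] at hy_close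
    obtain ⟨d, hd⟩ := Finsupp.mem_span_range_iff_exists_finsupp.1 hy_mem
    set S := d.support with hSdef
    set c : ℕ → ℂ := fun n => d n with hcdef
    have hc0 : ∀ n ∉ S, c n = 0 := fun n hn => Finsupp.notMem_support_iff.1 hn
    have hyeq : y = ∑ n ∈ S, c n • g n := by rw [← hd]; rfl
    set t : ℝ := ∑ n ∈ S, ‖c n‖ ^ 2 with htdef
    have ht0 : (0:ℝ) ≤ t := Finset.sum_nonneg fun n _ => sq_nonneg _
    have h1 : a * t ≤ ‖y‖ ^ 2 := by rw [hyeq]; exact hlow c S hc0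
    have h2 : ‖y‖ ≤ ‖x₀‖ + ε := by
      have h := norm_sub_norm_le y x₀
      rw [norm_sub_rev] at h
      linarith
    have h3 : Real.sqrt t ≤ (‖x₀‖ + ε) / Real.sqrt a := by
      have hy0 : 0 ≤ ‖x₀‖ + ε := by positivity
      have ht' : t ≤ (‖x₀‖ + ε) ^ 2 / a := by
        rw [le_div_iff₀ ha]
        nlinarith [norm_nonneg y]
      calc Real.sqrt t ≤ Real.sqrt ((‖x₀‖ + ε) ^ 2 / a) := Real.sqrt_le_sqrt ht'
        _ = (‖x₀‖ + ε) / Real.sqrt a := by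
            rw [Real.sqrt_div (sq_nonneg _), Real.sqrt_sq hy0]
    have h4 : ‖(inner ℂ y x₀ : ℂ)‖ ≤ Real.sqrt t * Real.sqrt T := by
      rw [hyeq, sum_inner]
      have step1 : ‖∑ n ∈ S, (inner ℂ (c n • g n) x₀ : ℂ)‖ ≤
          ∑ n ∈ S, ‖c n‖ * ‖(inner ℂ (g n) x₀ : ℂ)‖ := by
        refine le_trans (norm_sum_le _ _) (le_of_eq ?_)
        refine Finset.sum_congr rfl fun n _ => ?_
        rw [inner_smul_left, norm_mul, RCLike.norm_conj]
      refine le_trans step1 ?_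
      have cs := Finset.sum_mul_sq_le_sq_mul_sq S (fun n => ‖c n‖)
        (fun n => ‖(inner ℂ (g n) x₀ : ℂ)‖)
      have hpart : ∑ n ∈ S, ‖(inner ℂ (g n) x₀ : ℂ)‖ ^ 2 ≤ T :=
        Summable.sum_le_tsum S (fun n _ => sq_nonneg _) hsumm
      have hnn : (0:ℝ) ≤ ∑ n ∈ S, ‖c n‖ * ‖(inner ℂ (g n) x₀ : ℂ)‖ :=
        Finset.sum_nonneg fun n _ => mul_nonneg (norm_nonneg _) (norm_nonneg _)
      have hsq : (∑ n ∈ S, ‖c n‖ * ‖(inner ℂ (g n) x₀ : ℂ)‖) ^ 2 ≤ t * T := by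
        refine le_trans cs ?_
        exact mul_le_mul_of_nonneg_left hpart ht0
      have := Real.sqrt_le_sqrt hsq
      rw [Real.sqrt_sq hnn, Real.sqrt_mul ht0] at this
      exact this
    have h5 : ‖x₀‖ ^ 2 ≤ ‖(inner ℂ y x₀ : ℂ)‖ + ε * ‖x₀‖ := by
      have hxx : (‖x₀‖ ^ 2 : ℝ) = RCLike.re (inner ℂ x₀ x₀ : ℂ) := by
        rw [inner_self_eq_norm_sq]
      have hsplit : (inner ℂ x₀ x₀ : ℂ) = inner ℂ y x₀ + inner ℂ (x₀ - y) x₀ := by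
        rw [inner_sub_left]; ring
      have hre1 : RCLike.re (inner ℂ y x₀ : ℂ) ≤ ‖(inner ℂ y x₀ : ℂ)‖ := RCLike.re_le_norm _
      have hre2 : RCLike.re (inner ℂ (x₀ - y) x₀ : ℂ) ≤ ε * ‖x₀‖ := by
        refine le_trans (RCLike.re_le_norm _) (le_trans (norm_inner_le_norm _ _) ?_)
        exact mul_le_mul_of_nonneg_right hy_close.le (norm_nonneg _)
      rw [hxx, hsplit, map_add]
      linarith
    have h6 : Real.sqrt t * Real.sqrt T ≤ ((‖x₀‖ + ε) / Real.sqrt a) * Real.sqrt T :=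
      mul_le_mul_of_nonneg_right h3 (Real.sqrt_nonneg _)
    have h7 : ((‖x₀‖ + ε) / Real.sqrt a) * Real.sqrt T = (‖x₀‖ + ε) * C := by
      rw [hCeq]; ring
    nlinarith
  have hfin : ‖x₀‖ ^ 2 ≤ ‖x₀‖ * C := by
    refine le_of_forall_pos_le_add fun δ hδ => ?_
    have hεpos : 0 < δ / (C + ‖x₀‖ + 1) := by positivity
    have hk := key _ hεpos
    have hle : (δ / (C + ‖x₀‖ + 1)) * (C + ‖x₀‖) ≤ δ := by
      rw [div_mul_eq_mul_div, div_le_iff₀ (by positivity)]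
      nlinarith [norm_nonneg x₀, hC0, hδ.le]
    linarith
  rcases eq_or_lt_of_le (norm_nonneg x₀) with h0 | h0
  · rw [← h0]; simpa using hT0
  · have hxC : ‖x₀‖ ≤ C := by nlinarith
    have hC2 : C ^ 2 = T / a := Real.sq_sqrt (div_nonneg hT0 ha.le)
    have : ‖x₀‖ ^ 2 ≤ T / a := by nlinarith
    calc a * ‖x₀‖ ^ 2 ≤ a * (T / a) := by nlinarith
      _ = T := by field_simp

open UniformSpace in
lemma coe_sum_smul' {ι : Type*} (c : ι → ℂ) (g : ι → H) (S : Finset ι) :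
    ((∑ n ∈ S, c n • g n : H) : Completion H) =
      ∑ n ∈ S, c n • ((g n : H) : Completion H) := by
  classical
  induction S using Finset.induction_on with
  | empty => simp [UniformSpace.Completion.coe_zero]
  | insert _ _ h ih =>
      rw [Finset.sum_insert h, Finset.sum_insert h, Completion.coe_add,
        Completion.coe_smul, ih]

open UniformSpace in
lemma riesz_not_frame_del' {g : ℕ → H} {a b : ℝ} (ha : 0 < a) (hb : 0 < b)
    (hR : ∀ (c : ℕ → ℂ) (s : ℝ), HasSum (fun n => ‖c n‖ ^ 2) s →
      ∀ x : H, HasSum (fun n => c n • g n) x → a * s ≤ ‖x‖ ^ 2 ∧ ‖x‖ ^ 2 ≤ b * s)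
    (hbdd : ∀ (x : H) (S : Finset ℕ), ∑ n ∈ S, ‖(inner ℂ (g n) x : ℂ)‖ ^ 2 ≤ b * ‖x‖ ^ 2)
    (k : ℕ) : ¬ IsFrameSeq (fun n : {n : ℕ // n ≠ k} => g n) := by
  classical
  rintro ⟨a', b', ha', hab', hfr⟩
  have hbddK : ∀ (z : Completion H) (S : Finset ℕ),
      ∑ n ∈ S, ‖(inner ℂ ((g n : H) : Completion H) z : ℂ)‖ ^ 2 ≤ b * ‖z‖ ^ 2 := by
    intro z S
    have hcl : IsClosed {z : Completion H |
        ∑ n ∈ S, ‖(inner ℂ ((g n : H) : Completion H) z : ℂ)‖ ^ 2 ≤ b * ‖z‖ ^ 2} := by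
      apply isClosed_le
      · exact continuous_finset_sum _ fun n _ =>
          ((Completion.Continuous.inner continuous_const continuous_id).norm.pow 2)
      · exact continuous_const.mul (continuous_norm.pow 2)
    refine Completion.denseRange_coe.induction_on z hcl fun x => ?_
    simpa [Completion.inner_coe, Completion.norm_coe] using hbdd x S
  set M := (Submodule.span ℂ
      (Set.range (fun n : {n : ℕ // n ≠ k} => ((g n : H) : Completion H)))).topologicalClosure
    with hM
  haveI : CompleteSpace M := (Submodule.isClosed_topologicalClosure _).completeSpace_coe
  have hdist : ∀ z ∈ Submodule.span ℂ
      (Set.range (fun n : {n : ℕ // n ≠ k} => ((g n : H) : Completion H))),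
      a ≤ ‖((g k : H) : Completion H) - z‖ ^ 2 := by
    intro z hz
    obtain ⟨d, hd⟩ := Finsupp.mem_span_range_iff_exists_finsupp.1 hz
    set c : ℕ → ℂ := fun n => if h : n = k then 1 else -(d ⟨n, h⟩) with hc
    set T : Finset ℕ := d.support.map ⟨Subtype.val, Subtype.val_injective⟩ with hT
    have hkT : k ∉ T := by
      simp only [hT, Finset.mem_map, Function.Embedding.coeFn_mk]
      rintro ⟨⟨n, hn⟩, -, h⟩
      exact hn h
    set S : Finset ℕ := insert k T with hS
    have hcS : ∀ n ∉ S, c n = 0 := by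
      intro n hn
      simp only [hS, Finset.mem_insert, not_or] at hn
      obtain ⟨hnk, hnT⟩ := hn
      have hns : (⟨n, hnk⟩ : {n : ℕ // n ≠ k}) ∉ d.support := fun hmem =>
        hnT (Finset.mem_map.2 ⟨⟨n, hnk⟩, hmem, rfl⟩)
      simp only [hc, dif_neg hnk]
      rw [Finsupp.notMem_support_iff.1 hns, neg_zero]
    have hlow := (hR c _ (hasSum_sum_of_ne_finset_zero (s := S)
      (fun n hn => by simp [hcS n hn])) _ (hasSum_sum_of_ne_finset_zero (s := S)
      (fun n hn => by simp [hcS n hn]))).1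
    have hones : (1:ℝ) ≤ ∑ n ∈ S, ‖c n‖ ^ 2 := by
      have hkS : k ∈ S := Finset.mem_insert_self _ _
      have := Finset.single_le_sum (f := fun n => ‖c n‖ ^ 2)
        (fun n _ => sq_nonneg _) hkS
      simpa [hc] using this
    have hwK : ((∑ n ∈ S, c n • g n : H) : Completion H) =
        ((g k : H) : Completion H) - z := by
      have hcast : ((∑ n ∈ S, c n • g n : H) : Completion H) =
          ∑ n ∈ S, c n • ((g n : H) : Completion H) := coe_sum_smul' c g S
      have hz' : z = -∑ n ∈ T, c n • ((g n : H) : Completion H) := by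
        rw [← hd, Finsupp.sum, hT, Finset.sum_map, ← Finset.sum_neg_distrib]
        refine Finset.sum_congr rfl fun i _ => ?_
        simp [hc, dif_neg i.2]
      rw [hcast, hS, Finset.sum_insert hkT, hz']
      simp [hc]
    have hnormw : ‖((g k : H) : Completion H) - z‖ ^ 2 = ‖∑ n ∈ S, c n • g n‖ ^ 2 := by
      rw [← hwK, Completion.norm_coe]
    rw [hnormw]
    nlinarith
  have hgknot : ((g k : H) : Completion H) ∉ M := by
    intro hmem
    have hcl : IsClosed {z : Completion H |
        a ≤ ‖((g k : H) : Completion H) - z‖ ^ 2} :=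
      isClosed_le continuous_const (((continuous_const.sub continuous_id).norm).pow 2)
    have hsub : (M : Set (Completion H)) ⊆
        {z : Completion H | a ≤ ‖((g k : H) : Completion H) - z‖ ^ 2} := by
      rw [hM, Submodule.topologicalClosure_coe]
      exact closure_minimal (fun z hz => hdist z hz) hcl
    have := hsub hmem
    simp only [Set.mem_setOf_eq, sub_self, norm_zero] at this
    nlinarith
  set q : Completion H := ((g k : H) : Completion H) -
    (Submodule.orthogonalProjection M ((g k : H) : Completion H) : Completion H) with hq
  have hq_ne : q ≠ 0 := by
    intro h
    apply hgknot
    rw [sub_eq_zero] at h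
    rw [h]
    exact (Submodule.orthogonalProjection M ((g k : H) : Completion H)).2
  have hq_orth : ∀ n : ℕ, n ≠ k → (inner ℂ ((g n : H) : Completion H) q : ℂ) = 0 := by
    intro n hn
    have hqmem : q ∈ Mᗮ := Submodule.sub_starProjection_mem_orthogonal (K := M) _
    have hgn : ((g n : H) : Completion H) ∈ M :=
      Submodule.le_topologicalClosure _ (Submodule.subset_span ⟨⟨n, hn⟩, rfl⟩)
    exact Submodule.inner_right_of_mem_orthogonal hgn hqmem
  have hq_pos : 0 < ‖q‖ := norm_pos_iff.2 hq_ne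
  set ε : ℝ := min (‖q‖ / 2) (Real.sqrt (a' / b) * (‖q‖ / 2)) with hε
  have hε_pos : 0 < ε := lt_min (by positivity) (by positivity)
  obtain ⟨x, hx⟩ := Metric.denseRange_iff.1 Completion.denseRange_coe q ε hε_pos
  have hxq : ‖(x : Completion H) - q‖ < ε := by
    rw [dist_comm, dist_eq_norm] at hx
    exact hx
  have hsum_le : ∑' n : {n : ℕ // n ≠ k}, ‖(inner ℂ (g (n : ℕ)) x : ℂ)‖ ^ 2 ≤
      b * ‖(x : Completion H) - q‖ ^ 2 := by
    refine tsum_le_of_sum_le' (by positivity) fun T => ?_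
    have heq : ∑ n ∈ T, ‖(inner ℂ (g (n : ℕ)) x : ℂ)‖ ^ 2 =
        ∑ n ∈ T.map ⟨Subtype.val, Subtype.val_injective⟩,
          ‖(inner ℂ ((g n : H) : Completion H) ((x : Completion H) - q) : ℂ)‖ ^ 2 := by
      rw [Finset.sum_map]
      refine Finset.sum_congr rfl fun n _ => ?_
      simp only [Function.Embedding.coeFn_mk]
      rw [inner_sub_right, hq_orth n n.2, sub_zero, Completion.inner_coe]
    rw [heq]
    exact hbddK _ _
  have hfr_x := (hfr x).1
  have h1 : a' * ‖x‖ ^ 2 ≤ b * ‖(x : Completion H) - q‖ ^ 2 := le_trans hfr_x hsum_le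
  have hxn : ‖q‖ / 2 ≤ ‖x‖ := by
    have h2 : ‖q‖ - ‖(x : Completion H)‖ ≤ ‖(x : Completion H) - q‖ := by
      have h5 := norm_sub_norm_le q ((x : Completion H))
      rwa [norm_sub_rev q] at h5
    have h3 : ‖(x : Completion H)‖ = ‖x‖ := Completion.norm_coe x
    have h4 : ε ≤ ‖q‖ / 2 := min_le_left _ _
    linarith
  have h2 : b * ‖(x : Completion H) - q‖ ^ 2 < b * ε ^ 2 := by
    apply mul_lt_mul_of_pos_left _ hb
    exact pow_lt_pow_left₀ hxq (norm_nonneg _) (by norm_num)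
  have h3 : b * ε ^ 2 ≤ a' * (‖q‖ / 2) ^ 2 := by
    have hε2 : ε ≤ Real.sqrt (a' / b) * (‖q‖ / 2) := min_le_right _ _
    have hsq : ε ^ 2 ≤ (a' / b) * (‖q‖ / 2) ^ 2 := by
      have := pow_le_pow_left₀ hε_pos.le hε2 2
      rw [mul_pow, Real.sq_sqrt (by positivity)] at this
      exact this
    have := mul_le_mul_of_nonneg_left hsq hb.le
    calc b * ε ^ 2 ≤ b * ((a' / b) * (‖q‖ / 2) ^ 2) := this
      _ = a' * (‖q‖ / 2) ^ 2 := by field_simp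
  have h4 : a' * (‖q‖ / 2) ^ 2 ≤ a' * ‖x‖ ^ 2 :=
    mul_le_mul_of_nonneg_left (pow_le_pow_left₀ (by positivity) hxn 2) ha'.le
  linarith

theorem riesz_master' {g : ℕ → H} (h : IsRieszBasis g) :
    ∃ a b : ℝ, 0 < a ∧ 0 < b ∧
      (∀ x : H, Summable (fun n => ‖(inner ℂ (g n) x : ℂ)‖ ^ 2)) ∧
      (∀ x : H, a * ‖x‖ ^ 2 ≤ ∑' n, ‖(inner ℂ (g n) x : ℂ)‖ ^ 2 ∧
        ∑' n, ‖(inner ℂ (g n) x : ℂ)‖ ^ 2 ≤ b * ‖x‖ ^ 2) ∧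
      (∀ k : ℕ, ¬ IsFrameSeq (fun n : {n : ℕ // n ≠ k} => g n)) := by
  obtain ⟨hdense, a, b, ha, hb, hR⟩ := h
  have hup : ∀ (c : ℕ → ℂ) (S : Finset ℕ), (∀ n ∉ S, c n = 0) →
      ‖∑ n ∈ S, c n • g n‖ ^ 2 ≤ b * ∑ n ∈ S, ‖c n‖ ^ 2 :=
    fun c S hc => (riesz_finset' hR c S hc).2
  have hlowS : ∀ (c : ℕ → ℂ) (S : Finset ℕ), (∀ n ∉ S, c n = 0) →
      a * ∑ n ∈ S, ‖c n‖ ^ 2 ≤ ‖∑ n ∈ S, c n • g n‖ ^ 2 :=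
    fun c S hc => (riesz_finset' hR c S hc).1
  have hbdd : ∀ (x : H) (S : Finset ℕ), ∑ n ∈ S, ‖(inner ℂ (g n) x : ℂ)‖ ^ 2 ≤ b * ‖x‖ ^ 2 :=
    fun x S => bessel_finset' hup x S (by positivity)
  have hsumm : ∀ x : H, Summable (fun n => ‖(inner ℂ (g n) x : ℂ)‖ ^ 2) :=
    fun x => summable_of_sum_le (fun n => sq_nonneg _) (hbdd x)
  exact ⟨a, b, ha, hb, hsumm,
    fun x => ⟨frame_lower' ha hdense hlowS x (hsumm x),
      Summable.tsum_le_of_sum_le (hsumm x) (hbdd x)⟩,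
    fun k => riesz_not_frame_del' ha hb hR hbdd k⟩

end ClassicalAux

section BCAux
variable {H₁ H₂ : Type*} [NormedAddCommGroup H₁] [InnerProductSpace ℂ H₁]
  [NormedAddCommGroup H₂] [InnerProductSpace ℂ H₂]

lemma comp_riesz_of_bc₁ (F : ℕ → H₁ × H₂) (hF : IsBCRieszBasis F) :
    IsRieszBasis (fun n => (F n).1) := by
  obtain ⟨hdense, A, B, hA, hB, hR⟩ := hF
  constructor
  · rw [Set.eq_univ_iff_forall]
    intro x
    have hx : ((x, (0:H₂)) : H₁ × H₂) ∈ closure (Submodule.span ℂ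
        (Set.range (fun n => (((F n).1, 0) : H₁ × H₂)) ∪
         Set.range (fun n => (((0 : H₁), (F n).2) : H₁ × H₂))) : Set (H₁ × H₂)) := by
      rw [hdense]; trivial
    have hmem : x ∈ Prod.fst '' closure (Submodule.span ℂ
        (Set.range (fun n => (((F n).1, 0) : H₁ × H₂)) ∪
         Set.range (fun n => (((0 : H₁), (F n).2) : H₁ × H₂))) : Set (H₁ × H₂)) :=
      ⟨_, hx, rfl⟩
    have himg := image_closure_subset_closure_image
      (s := (Submodule.span ℂ
        (Set.range (fun n => (((F n).1, 0) : H₁ × H₂)) ∪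
         Set.range (fun n => (((0 : H₁), (F n).2) : H₁ × H₂))) : Set (H₁ × H₂)))
      (continuous_fst : Continuous (Prod.fst : H₁ × H₂ → H₁))
    have hsub : Prod.fst '' (Submodule.span ℂ
        (Set.range (fun n => (((F n).1, 0) : H₁ × H₂)) ∪
         Set.range (fun n => (((0 : H₁), (F n).2) : H₁ × H₂))) : Set (H₁ × H₂)) ⊆
        (Submodule.span ℂ (Set.range fun n => (F n).1) : Set H₁) := by
      rintro _ ⟨y, hy, rfl⟩
      have h1 : y.1 ∈ (Submodule.span ℂ
          (Set.range (fun n => (((F n).1, 0) : H₁ × H₂)) ∪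
           Set.range (fun n => (((0 : H₁), (F n).2) : H₁ × H₂)))).map
          (LinearMap.fst ℂ H₁ H₂) := Submodule.mem_map_of_mem hy
      rw [Submodule.map_span] at h1
      refine Submodule.span_le.2 ?_ h1
      rintro _ ⟨u, hu, rfl⟩
      rcases hu with ⟨n, rfl⟩ | ⟨n, rfl⟩
      · exact Submodule.subset_span ⟨n, rfl⟩
      · exact Submodule.zero_mem _
    exact closure_mono hsub (himg hmem)
  · refine ⟨A, B, hA, hB, fun c s hs x hx => ?_⟩
    have hs' : HasSum (fun n => bcAbsSq ((c n, (0:ℂ)))) (s / 2) := by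
      simpa [bcAbsSq] using hs.div_const 2
    have h0 : HasSum (fun n : ℕ => ((0:ℂ) • (F n).2 : H₂)) (0 : H₂) := by
      simpa using (hasSum_zero : HasSum (fun _ : ℕ => (0:H₂)) 0)
    have hx' : HasSum (fun n => ((((c n, (0:ℂ))).1 • (F n).1,
        (((c n, (0:ℂ))).2 • (F n).2)) : H₁ × H₂)) ((x, 0) : H₁ × H₂) :=
      hx.prodMk h0
    have hcon := hR (fun n => (c n, 0)) (s / 2) hs' (x, 0) hx'
    have h1 := hcon.1
    have h2 := hcon.2
    simp only [bcNormSq, norm_zero] at h1 h2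
    constructor <;> nlinarith

lemma comp_riesz_of_bc₂ (F : ℕ → H₁ × H₂) (hF : IsBCRieszBasis F) :
    IsRieszBasis (fun n => (F n).2) := by
  obtain ⟨hdense, A, B, hA, hB, hR⟩ := hF
  constructor
  · rw [Set.eq_univ_iff_forall]
    intro x
    have hx : (((0:H₁), x) : H₁ × H₂) ∈ closure (Submodule.span ℂ
        (Set.range (fun n => (((F n).1, 0) : H₁ × H₂)) ∪
         Set.range (fun n => (((0 : H₁), (F n).2) : H₁ × H₂))) : Set (H₁ × H₂)) := by
      rw [hdense]; trivial
    have hmem : x ∈ Prod.snd '' closure (Submodule.span ℂ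
        (Set.range (fun n => (((F n).1, 0) : H₁ × H₂)) ∪
         Set.range (fun n => (((0 : H₁), (F n).2) : H₁ × H₂))) : Set (H₁ × H₂)) :=
      ⟨_, hx, rfl⟩
    have himg := image_closure_subset_closure_image
      (s := (Submodule.span ℂ
        (Set.range (fun n => (((F n).1, 0) : H₁ × H₂)) ∪
         Set.range (fun n => (((0 : H₁), (F n).2) : H₁ × H₂))) : Set (H₁ × H₂)))
      (continuous_snd : Continuous (Prod.snd : H₁ × H₂ → H₂))
    have hsub : Prod.snd '' (Submodule.span ℂ
        (Set.range (fun n => (((F n).1, 0) : H₁ × H₂)) ∪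
         Set.range (fun n => (((0 : H₁), (F n).2) : H₁ × H₂))) : Set (H₁ × H₂)) ⊆
        (Submodule.span ℂ (Set.range fun n => (F n).2) : Set H₂) := by
      rintro _ ⟨y, hy, rfl⟩
      have h1 : y.2 ∈ (Submodule.span ℂ
          (Set.range (fun n => (((F n).1, 0) : H₁ × H₂)) ∪
           Set.range (fun n => (((0 : H₁), (F n).2) : H₁ × H₂)))).map
          (LinearMap.snd ℂ H₁ H₂) := Submodule.mem_map_of_mem hy
      rw [Submodule.map_span] at h1
      refine Submodule.span_le.2 ?_ h1
      rintro _ ⟨u, hu, rfl⟩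
      rcases hu with ⟨n, rfl⟩ | ⟨n, rfl⟩
      · exact Submodule.zero_mem _
      · exact Submodule.subset_span ⟨n, rfl⟩
    exact closure_mono hsub (himg hmem)
  · refine ⟨A, B, hA, hB, fun c s hs x hx => ?_⟩
    have hs' : HasSum (fun n => bcAbsSq (((0:ℂ), c n))) (s / 2) := by
      simpa [bcAbsSq] using hs.div_const 2
    have h0 : HasSum (fun n : ℕ => ((0:ℂ) • (F n).1 : H₁)) (0 : H₁) := by
      simpa using (hasSum_zero : HasSum (fun _ : ℕ => (0:H₁)) 0)
    have hx' : HasSum (fun n => (((((0:ℂ), c n)).1 • (F n).1,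
        ((((0:ℂ), c n)).2 • (F n).2)) : H₁ × H₂)) ((0, x) : H₁ × H₂) :=
      h0.prodMk hx
    have hcon := hR (fun n => (0, c n)) (s / 2) hs' (0, x) hx'
    have h1 := hcon.1
    have h2 := hcon.2
    simp only [bcNormSq, norm_zero] at h1 h2
    constructor <;> nlinarith

end BCAux

/-- a bicomplex Riesz basis for `H_bc` is an exact bc-frame for `H_bc`. -/
theorem bc_riesz_basis_is_exact_frame {H₁ H₂ : Type*}
    [NormedAddCommGroup H₁] [InnerProductSpace ℂ H₁]
    [NormedAddCommGroup H₂] [InnerProductSpace ℂ H₂] (F : ℕ → H₁ × H₂)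
    (hF : IsBCRieszBasis F) : IsExactBCFrame F := by
  have h1 := comp_riesz_of_bc₁ F hF
  have h2 := comp_riesz_of_bc₂ F hF
  obtain ⟨a₁, b₁, ha₁, hb₁, hsumm₁, hfr₁, hdel₁⟩ := riesz_master' h1
  obtain ⟨a₂, b₂, ha₂, hb₂, hsumm₂, hfr₂, hdel₂⟩ := riesz_master' h2
  constructor
  · refine ⟨min a₁ a₂, max (min a₁ a₂) (max b₁ b₂), lt_min ha₁ ha₂,
      le_max_left _ _, fun f => ?_⟩
    have hterm : (fun n => bcAbsSq (bcInner f (F n))) =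
        fun n => (1/2) * (‖(inner ℂ (F n).1 f.1 : ℂ)‖ ^ 2 + ‖(inner ℂ (F n).2 f.2 : ℂ)‖ ^ 2) := by
      funext n
      simp only [bcAbsSq, bcInner]
      ring
    have hts : ∑' n, bcAbsSq (bcInner f (F n)) =
        (1/2) * ((∑' n, ‖(inner ℂ (F n).1 f.1 : ℂ)‖ ^ 2) +
          ∑' n, ‖(inner ℂ (F n).2 f.2 : ℂ)‖ ^ 2) := by
      rw [hterm, tsum_mul_left, ((hsumm₁ f.1).hasSum.add (hsumm₂ f.2).hasSum).tsum_eq]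
    have hA1 := (hfr₁ f.1).1
    have hA2 := (hfr₂ f.2).1
    have hB1 := (hfr₁ f.1).2
    have hB2 := (hfr₂ f.2).2
    have hm1 : min a₁ a₂ ≤ a₁ := min_le_left _ _
    have hm2 : min a₁ a₂ ≤ a₂ := min_le_right _ _
    have hM1 : b₁ ≤ max (min a₁ a₂) (max b₁ b₂) :=
      le_trans (le_max_left b₁ b₂) (le_max_right _ _)
    have hM2 : b₂ ≤ max (min a₁ a₂) (max b₁ b₂) :=
      le_trans (le_max_right b₁ b₂) (le_max_right _ _)
    rw [hts]
    simp only [bcNormSq]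
    constructor
    · nlinarith [sq_nonneg ‖f.1‖, sq_nonneg ‖f.2‖]
    · nlinarith [sq_nonneg ‖f.1‖, sq_nonneg ‖f.2‖,
        tsum_nonneg (L := SummationFilter.unconditional ℕ) (fun n => sq_nonneg ‖(inner ℂ (F n).1 f.1 : ℂ)‖),
        tsum_nonneg (L := SummationFilter.unconditional ℕ) (fun n => sq_nonneg ‖(inner ℂ (F n).2 f.2 : ℂ)‖)]
  · rintro k ⟨A', B', hA', hAB', hfr'⟩
    apply hdel₁ k
    refine ⟨A', max A' B', hA', le_max_left _ _, fun x => ?_⟩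
    have h := hfr' ((x, 0) : H₁ × H₂)
    have hterm : (fun n : {n : ℕ // n ≠ k} =>
        bcAbsSq (bcInner ((x, 0) : H₁ × H₂) (F (n : ℕ)))) =
        fun n : {n : ℕ // n ≠ k} => (1/2) * ‖(inner ℂ (F (n : ℕ)).1 x : ℂ)‖ ^ 2 := by
      funext n
      simp only [bcAbsSq, bcInner, inner_zero_right, norm_zero]
      ring
    rw [hterm, tsum_mul_left] at h
    have hn : bcNormSq ((x, 0) : H₁ × H₂) = ‖x‖ ^ 2 / 2 := by
      simp [bcNormSq]
    rw [hn] at h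
    have hB'le : B' ≤ max A' B' := le_max_right _ _
    constructor
    · linarith [h.1]
    · nlinarith [h.2, sq_nonneg ‖x‖]
end
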